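/- Let K be a field, N ≥ 3 an integer, E a finite-dimensional K-vector space, R a subspace of E^⊗N, and r an integer with 1 ≤ r ≤ N-2. If the intersection ⋂_{i+j=r, i,j≥0} E^⊗i ⊗ R ⊗ E^⊗j equals R ⊗ E^⊗r as subspaces of E^⊗(N+r), then R = 0 or R = E^⊗N. -/

import Mathlib

open TensorProduct

variable (K : Type*) [Field K] (E : Type*) [AddCommGroup E] [Module K E]

/-- The subspace `R ⊗ E^⊗r` of `E^⊗(N+r)`: the image of the canonical map
`R ⊗ E^⊗r → E^⊗N ⊗ E^⊗r ≅ E^⊗(N+r)` induced by the inclusion of `R`. -/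
noncomputable def subRight {N : ℕ} (R : Submodule K (⨂[K]^N E)) (r : ℕ) :
    Submodule K (⨂[K]^(N + r) E) :=
  LinearMap.range ((TensorPower.mulEquiv (n := N) (m := r)).toLinearMap
    ∘ₗ LinearMap.rTensor (⨂[K]^r E) R.subtype)

/-- The subspace `E^⊗i ⊗ R ⊗ E^⊗j` of `E^⊗(N+r)` (for `i + j = r`): the image of the
canonical map `E^⊗i ⊗ (R ⊗ E^⊗j) → E^⊗i ⊗ (E^⊗N ⊗ E^⊗j) ≅ E^⊗(i+(N+j)) ≅ E^⊗(N+r)`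
induced by the inclusion of `R`. -/
noncomputable def subMiddle {N : ℕ} (R : Submodule K (⨂[K]^N E)) (r i j : ℕ)
    (h : i + j = r) : Submodule K (⨂[K]^(N + r) E) :=
  LinearMap.range ((TensorPower.cast K E (by omega)).toLinearMap
    ∘ₗ (TensorPower.mulEquiv (n := i) (m := N + j)).toLinearMap
    ∘ₗ LinearMap.lTensor (⨂[K]^i E)
        ((TensorPower.mulEquiv (n := N) (m := j)).toLinearMap
          ∘ₗ LinearMap.rTensor (⨂[K]^j E) R.subtype))

noncomputable section St10Aux
namespace St10

open PiTensorProduct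

variable {K} {E}

local infixl:70 " ₜ* " => @GradedMonoid.GMul.mul ℕ (fun i => ⨂[K]^i E) _ _ _ _

/-- `⨂[K]^1 E ≃ E`. -/
def toE : (⨂[K]^1 E) ≃ₗ[K] E := PiTensorProduct.subsingletonEquiv (0 : Fin 1)

/-- `E → ⨂[K]^1 E` as a linear map. -/
def tp1L : E →ₗ[K] ⨂[K]^1 E := (toE (K := K) (E := E)).symm.toLinearMap

lemma toE_tprod (f : Fin 1 → E) : toE (tprod K f) = f 0 :=
  subsingletonEquiv_apply_tprod _ _

lemma tp1L_eq (e : E) : tp1L (K := K) e = tprod K (fun _ : Fin 1 => e) := by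
  apply (toE (K := K) (E := E)).injective
  rw [toE_tprod]
  simp [tp1L]

lemma exists_tp1 (w : ⨂[K]^1 E) : ∃ e : E, tp1L (K := K) e = w :=
  ⟨toE w, by simp [tp1L]⟩

lemma toE_tp1L (e : E) : toE (tp1L (K := K) e) = e := by simp [tp1L]

/-- helper to kill casts between definitionally equal indices -/
lemma cast_rfl' {i : ℕ} (h : i = i) (a : ⨂[K]^i E) : TensorPower.cast K E h a = a := by
  rw [TensorPower.cast_refl]; rfl

lemma gMul_add {n m : ℕ} (a : ⨂[K]^n E) (b c : ⨂[K]^m E) :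
    a ₜ* (b + c) = a ₜ* b + a ₜ* c := by
  simp only [TensorPower.gMul_def, tmul_add, map_add]

lemma add_gMul {n m : ℕ} (a b : ⨂[K]^n E) (c : ⨂[K]^m E) :
    (a + b) ₜ* c = a ₜ* c + b ₜ* c := by
  simp only [TensorPower.gMul_def, add_tmul, map_add]

lemma gMul_smul {n m : ℕ} (r : K) (a : ⨂[K]^n E) (b : ⨂[K]^m E) :
    a ₜ* (r • b) = r • (a ₜ* b) := by
  simp only [TensorPower.gMul_def, tmul_smul, map_smul]

lemma smul_gMul {n m : ℕ} (r : K) (a : ⨂[K]^n E) (b : ⨂[K]^m E) :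
    (r • a) ₜ* b = r • (a ₜ* b) := by
  rw [TensorPower.gMul_def, TensorPower.gMul_def, ← smul_tmul', map_smul]

lemma gMul_zero {n m : ℕ} (a : ⨂[K]^n E) : a ₜ* (0 : ⨂[K]^m E) = 0 := by
  simp only [TensorPower.gMul_def, tmul_zero, map_zero]

lemma zero_gMul {n m : ℕ} (b : ⨂[K]^m E) : (0 : ⨂[K]^n E) ₜ* b = 0 := by
  simp only [TensorPower.gMul_def, zero_tmul, map_zero]

/-- moving a cast out of the left factor of a product -/
lemma cast_gMul {i j p : ℕ} (h : i = j) (h' : i + p = j + p) (x : ⨂[K]^i E) (b : ⨂[K]^p E) :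
    (TensorPower.cast K E h x) ₜ* b = TensorPower.cast K E h' (x ₜ* b) := by
  subst h
  rw [cast_rfl', cast_rfl']

/-- the products `u ₜ* tp1L e` span `⨂^(q+1)` -/
lemma span_mul_tp1 (q : ℕ) :
    Submodule.span K {w : ⨂[K]^(q+1) E | ∃ (u : ⨂[K]^q E) (e : E), u ₜ* tp1L e = w} = ⊤ := by
  rw [Submodule.eq_top_iff']
  intro z
  have hz : z = TensorPower.mulEquiv (n := q) (m := 1)
      ((TensorPower.mulEquiv (n := q) (m := 1)).symm z) := by simp
  rw [hz]
  generalize ((TensorPower.mulEquiv (n := q) (m := 1) (R := K) (M := E)).symm z) = y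
  induction y using TensorProduct.induction_on with
  | zero => simp
  | tmul u w =>
    obtain ⟨e, rfl⟩ := exists_tp1 w
    exact Submodule.subset_span ⟨u, e, (TensorPower.gMul_def u (tp1L e)).symm⟩
  | add y₁ y₂ h₁ h₂ =>
    rw [map_add]
    exact Submodule.add_mem _ h₁ h₂

/-- the products `cast (tp1L e ₜ* u)` span `⨂^(s+1)` -/
lemma span_tp1_mul (s : ℕ) (h : 1 + s = s + 1) :
    Submodule.span K {w : ⨂[K]^(s+1) E |
      ∃ (e : E) (u : ⨂[K]^s E), TensorPower.cast K E h (tp1L e ₜ* u) = w} = ⊤ := by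
  rw [Submodule.eq_top_iff']
  intro z
  have hz : z = TensorPower.cast K E h (TensorPower.mulEquiv (n := 1) (m := s)
      ((TensorPower.mulEquiv (n := 1) (m := s)).symm (TensorPower.cast K E h.symm z))) := by
    simp [TensorPower.cast_cast, cast_rfl']
  rw [hz]
  generalize ((TensorPower.mulEquiv (n := 1) (m := s) (R := K) (M := E)).symm
      (TensorPower.cast K E h.symm z)) = y
  induction y using TensorProduct.induction_on with
  | zero => simp
  | tmul w u =>
    obtain ⟨e, rfl⟩ := exists_tp1 w
    exact Submodule.subset_span ⟨e, u, by rw [TensorPower.gMul_def]⟩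
  | add y₁ y₂ h₁ h₂ =>
    rw [map_add, map_add]
    exact Submodule.add_mem _ h₁ h₂


/-- contraction of the last tensor factor -/
def conR (ψ : Module.Dual K (⨂[K]^1 E)) (n : ℕ) : (⨂[K]^(n+1) E) →ₗ[K] ⨂[K]^n E :=
  (TensorProduct.rid K _).toLinearMap
    ∘ₗ LinearMap.lTensor _ ψ
    ∘ₗ (TensorPower.mulEquiv (n := n) (m := 1)).symm.toLinearMap

lemma conR_mul (ψ : Module.Dual K (⨂[K]^1 E)) {n : ℕ} (u : ⨂[K]^n E) (b : ⨂[K]^1 E) :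
    conR ψ n (u ₜ* b) = ψ b • u := by
  rw [TensorPower.gMul_def]
  simp [conR]

/-- contraction of the first tensor factor -/
def conL (φ : Module.Dual K E) (n : ℕ) : (⨂[K]^(n+1) E) →ₗ[K] ⨂[K]^n E :=
  (TensorProduct.lid K _).toLinearMap
    ∘ₗ LinearMap.rTensor _ (φ ∘ₗ (toE (K := K) (E := E)).toLinearMap)
    ∘ₗ (TensorPower.mulEquiv (n := 1) (m := n)).symm.toLinearMap
    ∘ₗ (TensorPower.cast K E (by omega : n + 1 = 1 + n)).toLinearMap

lemma conL_cast_mul (φ : Module.Dual K E) {n : ℕ} (h : 1 + n = n + 1) (e : E)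
    (y : ⨂[K]^n E) :
    conL φ n (TensorPower.cast K E h (tp1L e ₜ* y)) = φ e • y := by
  rw [TensorPower.gMul_def]
  simp [conL, TensorPower.cast_cast, cast_rfl', toE_tp1L]

/-- naturality: contracting the last slot commutes with left multiplication -/
lemma conR_nat (ψ : Module.Dual K (⨂[K]^1 E)) {p q : ℕ} (a : ⨂[K]^p E)
    (z : ⨂[K]^(q+1) E) :
    conR ψ (p + q) ((a ₜ* z : ⨂[K]^(p + (q + 1)) E)) = a ₜ* conR ψ q z := by
  have hz : z ∈ (⊤ : Submodule K (⨂[K]^(q+1) E)) := trivial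
  rw [← span_mul_tp1 (K := K) (E := E) q] at hz
  induction hz using Submodule.span_induction with
  | mem w hw =>
    obtain ⟨u, e, rfl⟩ := hw
    have key : (a ₜ* (u ₜ* tp1L e) : ⨂[K]^(p + (q + 1)) E) = (a ₜ* u) ₜ* tp1L e := by
      rw [← TensorPower.mul_assoc]; exact cast_rfl' _ _
    rw [key, conR_mul, conR_mul, gMul_smul]
  | zero => rw [gMul_zero, map_zero, map_zero, gMul_zero]
  | add y₁ y₂ _ _ h₁ h₂ => rw [gMul_add, map_add, map_add, gMul_add, h₁, h₂]
  | smul r y _ h => rw [gMul_smul, map_smul, map_smul, gMul_smul, h]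

/-- naturality: contracting the last slot commutes with casts -/
lemma conR_cast (ψ : Module.Dual K (⨂[K]^1 E)) {s t : ℕ} (h : s + 1 = t + 1) (h' : s = t)
    (w : ⨂[K]^(s+1) E) :
    conR ψ t (TensorPower.cast K E h w) = TensorPower.cast K E h' (conR ψ s w) := by
  subst h'
  rw [cast_rfl', cast_rfl']

/-- naturality: contracting the first slot commutes with right multiplication by `tp1L e` -/
lemma conL_nat (φ : Module.Dual K E) {s : ℕ} (w : ⨂[K]^(s+1) E) (e' : E) :
    conL φ (s + 1) (w ₜ* tp1L e') = (conL φ s w) ₜ* tp1L e' := by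
  have hw : w ∈ (⊤ : Submodule K (⨂[K]^(s+1) E)) := trivial
  rw [← span_tp1_mul (K := K) (E := E) s (by omega)] at hw
  induction hw using Submodule.span_induction with
  | mem w hw =>
    obtain ⟨e, u, rfl⟩ := hw
    have key : (tp1L e ₜ* (u ₜ* tp1L e') : ⨂[K]^(1 + (s + 1)) E) = (tp1L e ₜ* u) ₜ* tp1L e' := by
      rw [← TensorPower.mul_assoc]; exact cast_rfl' _ _
    rw [conL_cast_mul, smul_gMul, cast_gMul (h' := (by omega : (1+s)+1 = (s+1)+1)),
      ← conL_cast_mul φ (by omega : 1 + (s+1) = (s+1)+1) e (u ₜ* tp1L e'), key]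
  | zero => rw [zero_gMul, map_zero, map_zero, zero_gMul]
  | add y₁ y₂ _ _ h₁ h₂ => rw [add_gMul, map_add, map_add, add_gMul, h₁, h₂]
  | smul r y _ h => rw [smul_gMul, map_smul, map_smul, smul_gMul, h]


/-- left multiplication by `tp1L e` as a bilinear map, with cast -/
def mulC (s : ℕ) : (⨂[K]^1 E) →ₗ[K] (⨂[K]^s E) →ₗ[K] ⨂[K]^(s+1) E :=
  (TensorProduct.mk K _ _).compr₂
    ((TensorPower.cast K E (by omega : 1 + s = s + 1)).toLinearMap
      ∘ₗ (TensorPower.mulEquiv (n := 1) (m := s)).toLinearMap)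

lemma mulC_apply (s : ℕ) (x : ⨂[K]^1 E) (y : ⨂[K]^s E) :
    mulC s x y = TensorPower.cast K E (by omega : 1 + s = s + 1) (x ₜ* y) := rfl

/-- decomposition of a tensor along first-slot contractions -/
lemma dec {ι : Type*} [Fintype ι] (b : Module.Basis ι K E) (s : ℕ) (z : ⨂[K]^(s+1) E) :
    z = ∑ i, TensorPower.cast K E (by omega : 1 + s = s + 1)
      (tp1L (b i) ₜ* conL (b.coord i) s z) := by
  have hL : (LinearMap.id : ⨂[K]^(s+1) E →ₗ[K] ⨂[K]^(s+1) E)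
      = ∑ i, mulC s (tp1L (b i)) ∘ₗ conL (b.coord i) s := by
    apply LinearMap.ext_on (span_tp1_mul (K := K) (E := E) s (by omega))
    rintro w ⟨e, u, rfl⟩
    simp only [LinearMap.id_apply, LinearMap.sum_apply, LinearMap.comp_apply, conL_cast_mul]
    have hterm : ∀ i : ι, mulC s (tp1L (b i)) (b.coord i e • u)
        = mulC s ((b.coord i e) • tp1L (b i)) u := by
      intro i; simp only [map_smul, LinearMap.smul_apply]
    simp only [hterm]
    rw [← LinearMap.sum_apply, ← map_sum]
    have : ∑ i, (b.coord i e) • tp1L (K := K) (b i) = tp1L e := by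
      simp only [← map_smul]
      rw [← map_sum]
      congr 1
      simp only [Module.Basis.coord_apply]
      exact b.sum_repr e
    rw [this, mulC_apply]
  conv_lhs => rw [← LinearMap.id_apply (R := K) z, hL]
  simp only [LinearMap.sum_apply, LinearMap.comp_apply, mulC_apply]

/-- the subspace `E ⊗ S` -/
def lS {n : ℕ} (S : Submodule K (⨂[K]^n E)) : Submodule K (⨂[K]^(n+1) E) :=
  Submodule.span K {w | ∃ (e : E) (y : ⨂[K]^n E), y ∈ S ∧
    TensorPower.cast K E (by omega : 1 + n = n + 1) (tp1L e ₜ* y) = w}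

/-- span of first-slot contractions -/
def DD {m : ℕ} (S : Submodule K (⨂[K]^(m+1) E)) : Submodule K (⨂[K]^m E) :=
  ⨆ φ : Module.Dual K E, S.map (conL φ m)

lemma core [FiniteDimensional K E] :
    ∀ (n : ℕ) (S : Submodule K (⨂[K]^n E)),
      (∀ x ∈ S, ∀ e : E, x ₜ* tp1L e ∈ lS S) → S = ⊥ ∨ S = ⊤ := by
  intro n
  induction n with
  | zero =>
    intro S _
    by_cases hbot : S = ⊥
    · exact Or.inl hbot
    right
    obtain ⟨z, hz, hz0⟩ := (Submodule.ne_bot_iff S).mp hbot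
    rw [Submodule.eq_top_iff']
    intro w
    set ι0 := (PiTensorProduct.isEmptyEquiv (Fin 0) :
      (⨂[K]^0 E) ≃ₗ[K] K)
    have hzne : ι0 z ≠ 0 := fun hc => hz0 (by
      apply ι0.injective; rw [hc, map_zero])
    have hw : w = (ι0 w * (ι0 z)⁻¹) • z := by
      apply ι0.injective
      rw [map_smul]
      field_simp
      rw [smul_eq_mul, div_mul_cancel₀ _ hzne]
    rw [hw]
    exact S.smul_mem _ hz
  | succ m IH =>
    intro S hS
    have hcon : ∀ (φ : Module.Dual K E) (v : ⨂[K]^(m+1+1) E), v ∈ lS S →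
        conL φ (m+1) v ∈ S := by
      intro φ v hv
      induction hv using Submodule.span_induction with
      | mem w hw =>
        obtain ⟨e', y, hy, rfl⟩ := hw
        rw [conL_cast_mul]
        exact S.smul_mem _ hy
      | zero => rw [map_zero]; exact S.zero_mem
      | add a c _ _ ha hc => rw [map_add]; exact S.add_mem ha hc
      | smul r a _ ha => rw [map_smul]; exact S.smul_mem r ha
    have hA : ∀ u ∈ DD S, ∀ e : E, u ₜ* tp1L e ∈ S := by
      intro u hu e
      refine Submodule.iSup_induction (motive := fun u => u ₜ* tp1L e ∈ S) _ hu ?_ ?_ ?_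
      · rintro φ x ⟨x, hx, rfl⟩
        show conL φ m x ₜ* tp1L e ∈ S
        rw [← conL_nat]
        exact hcon φ _ (hS x hx e)
      · show (0 : ⨂[K]^m E) ₜ* tp1L e ∈ S
        rw [zero_gMul]; exact S.zero_mem
      · intro x y hx hy
        show (x + y) ₜ* tp1L e ∈ S
        rw [add_gMul]; exact S.add_mem hx hy
    have hC : ∀ z ∈ S, z ∈ lS (DD S) := by
      intro z hz
      let b := Module.Free.chooseBasis K E
      rw [dec b m z]
      apply Submodule.sum_mem
      intro i _
      apply Submodule.subset_span
      exact ⟨b i, conL (b.coord i) m z,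
        le_iSup (fun φ : Module.Dual K E => S.map (conL φ m)) (b.coord i)
          (Submodule.mem_map_of_mem hz), rfl⟩
    rcases IH (DD S) (fun u hu e => hC _ (hA u hu e)) with hbot | htop
    · left
      rw [Submodule.eq_bot_iff]
      intro z hz
      have hmem := hC z hz
      rw [hbot] at hmem
      have hle : lS (⊥ : Submodule K (⨂[K]^m E)) ≤ ⊥ := by
        rw [lS]
        apply Submodule.span_le.mpr
        rintro w ⟨e, y, hy, rfl⟩
        simp only [Submodule.mem_bot] at hy
        subst hy
        simp [gMul_zero]
      exact hle hmem
    · right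
      rw [Submodule.eq_top_iff']
      intro z
      have hz : z ∈ Submodule.span K
          {w : ⨂[K]^(m+1) E | ∃ (u : ⨂[K]^m E) (e : E), u ₜ* tp1L e = w} := by
        rw [span_mul_tp1]; trivial
      have hle : Submodule.span K
          {w : ⨂[K]^(m+1) E | ∃ (u : ⨂[K]^m E) (e : E), u ₜ* tp1L e = w} ≤ S := by
        apply Submodule.span_le.mpr
        rintro w ⟨u, e, rfl⟩
        exact hA u (htop ▸ Submodule.mem_top) e
      exact hle hz


/-- multiplying by a degree-0 tensor is scalar multiplication -/
lemma mul_tp0 (n : ℕ) (x : ⨂[K]^n E) (y₀ : ⨂[K]^0 E) :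
    (x ₜ* y₀ : ⨂[K]^(n+0) E) = (PiTensorProduct.isEmptyEquiv (Fin 0) y₀ : K) • x := by
  set c : K := PiTensorProduct.isEmptyEquiv (Fin 0) y₀ with hc
  have hy : (TensorPower.algebraMap₀ (R := K) (M := E) c) = y₀ := by
    rw [hc]; simp [TensorPower.algebraMap₀]
  rw [← hy, ← TensorPower.mul_algebraMap₀]
  exact (cast_rfl' _ _).symm

/-- the subspace `E^1 ⊗ R ⊗ E^k`, given by generators -/
def Mspan (N : ℕ) (R : Submodule K (⨂[K]^N E)) (k : ℕ) :
    Submodule K (⨂[K]^(N+(k+1)) E) :=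
  Submodule.span K {w | ∃ (e : E) (x : ⨂[K]^N E) (_ : x ∈ R) (y : ⨂[K]^k E),
    TensorPower.cast K E (by omega : 1 + (N + k) = N + (k+1)) (tp1L e ₜ* (x ₜ* y)) = w}

lemma subMiddle_le_Mspan {N k : ℕ} (R : Submodule K (⨂[K]^N E)) (hpf : 1 + k = k + 1) :
    subMiddle K E R (k+1) 1 k hpf ≤ Mspan N R k := by
  rintro w ⟨t, rfl⟩
  induction t using TensorProduct.induction_on with
  | zero => rw [map_zero]; exact Submodule.zero_mem _
  | tmul a s =>
    induction s using TensorProduct.induction_on with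
    | zero =>
      rw [tmul_zero, map_zero]; exact Submodule.zero_mem _
    | tmul xr y =>
      obtain ⟨e, rfl⟩ := exists_tp1 a
      apply Submodule.subset_span
      exact ⟨e, xr.1, xr.2, y, rfl⟩
    | add s₁ s₂ h₁ h₂ =>
      rw [tmul_add, map_add]
      exact Submodule.add_mem _ h₁ h₂
  | add t₁ t₂ h₁ h₂ =>
    rw [map_add]
    exact Submodule.add_mem _ h₁ h₂

lemma mem_subRight {N rs : ℕ} (R : Submodule K (⨂[K]^N E)) {x : ⨂[K]^N E} (hx : x ∈ R)
    (y : ⨂[K]^rs E) : (x ₜ* y : ⨂[K]^(N+rs) E) ∈ subRight K E R rs :=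
  ⟨(⟨x, hx⟩ : R) ⊗ₜ[K] y, rfl⟩

/-- the right-contraction maps `Mspan (k+1)` into `Mspan k` -/
lemma conR_Mspan {N k : ℕ} (R : Submodule K (⨂[K]^N E)) (ψ : Module.Dual K (⨂[K]^1 E))
    {v : ⨂[K]^(N+(k+1+1)) E} (hv : v ∈ Mspan N R (k+1)) :
    conR ψ (N+(k+1)) v ∈ Mspan N R k := by
  induction hv using Submodule.span_induction with
  | mem w hw =>
    obtain ⟨e, x', hx', y', rfl⟩ := hw
    have E1 : conR ψ (N+(k+1)) (TensorPower.cast K E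
          (by omega : 1 + (N + (k+1)) = N + (k+1+1))
          ((tp1L e ₜ* ((x' ₜ* y' : ⨂[K]^(N+(k+1)) E)) : ⨂[K]^(1+(N+(k+1))) E)))
        = TensorPower.cast K E (by omega : 1 + (N + k) = N + (k+1))
          (conR ψ (1+(N+k))
            ((tp1L e ₜ* ((x' ₜ* y' : ⨂[K]^(N+(k+1)) E)) : ⨂[K]^(1+(N+(k+1))) E))) :=
      conR_cast ψ _ _ _
    have E2 : conR ψ (1+(N+k))
          ((tp1L e ₜ* ((x' ₜ* y' : ⨂[K]^(N+(k+1)) E)) : ⨂[K]^(1+(N+(k+1))) E))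
        = tp1L e ₜ* conR ψ (N+k) ((x' ₜ* y' : ⨂[K]^(N+(k+1)) E)) :=
      conR_nat ψ (tp1L e) ((x' ₜ* y' : ⨂[K]^(N+(k+1)) E))
    have E3 : conR ψ (N+k) ((x' ₜ* y' : ⨂[K]^(N+(k+1)) E)) = x' ₜ* conR ψ k y' :=
      conR_nat ψ x' y'
    rw [E1, E2, E3]
    exact Submodule.subset_span ⟨e, x', hx', conR ψ k y', rfl⟩
  | zero => rw [map_zero]; exact Submodule.zero_mem _
  | add a c _ _ ha hc => rw [map_add]; exact Submodule.add_mem _ ha hc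
  | smul r a _ ha => rw [map_smul]; exact Submodule.smul_mem _ r ha

lemma Mspan_zero_le_lS {N : ℕ} (R : Submodule K (⨂[K]^N E)) :
    Mspan N R 0 ≤ lS R := by
  apply Submodule.span_le.mpr
  rintro w ⟨e, x', hx', y₀, rfl⟩
  apply Submodule.subset_span
  refine ⟨e, (PiTensorProduct.isEmptyEquiv (Fin 0) y₀ : K) • x',
    Submodule.smul_mem _ _ hx', ?_⟩
  rw [← mul_tp0 N x' y₀]

/-- the main lemma, in reduced form -/
lemma main [FiniteDimensional K E] (N : ℕ) (hN : 3 ≤ N)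
    (R : Submodule K (⨂[K]^N E)) (rr : ℕ)
    (hsub : subRight K E R (rr+1) ≤ subMiddle K E R (rr+1) 1 rr (by omega)) :
    R = ⊥ ∨ R = ⊤ := by
  rcases subsingleton_or_nontrivial E with hE | hE
  · left
    have hz : ∀ z : ⨂[K]^N E, z = 0 := by
      intro z
      induction z using PiTensorProduct.induction_on with
      | smul_tprod c f =>
        have hf : f ⟨0, by omega⟩ = 0 := Subsingleton.elim _ _
        rw [MultilinearMap.map_coord_zero _ (⟨0, by omega⟩ : Fin N) hf, smul_zero]
      | add x y hx hy => rw [hx, hy, add_zero]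
    exact (Submodule.eq_bot_iff R).mpr fun x _ => hz x
  · -- pick a vector/functional pair
    set b := Module.Free.chooseBasis K E with hb
    obtain ⟨i₀⟩ := b.index_nonempty
    set e₀ : E := b i₀ with he₀
    set φ₀ : Module.Dual K E := b.coord i₀ with hφ₀
    have h₀ : φ₀ e₀ = 1 := by simp [hφ₀, he₀]
    set ψ₀ : Module.Dual K (⨂[K]^1 E) := φ₀ ∘ₗ (toE (K := K) (E := E)).toLinearMap with hψ₀
    -- the descending chain
    have P : ∀ d k, k + d = rr →
        ∀ x ∈ R, ∀ y : ⨂[K]^(k+1) E, (x ₜ* y : ⨂[K]^(N+(k+1)) E) ∈ Mspan N R k := by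
      intro d
      induction d with
      | zero =>
        intro k hk x hx y
        have hkrr : k = rr := by omega
        subst hkrr
        exact subMiddle_le_Mspan R _ (hsub (mem_subRight R hx y))
      | succ d IH =>
        intro k hk x hx y
        have h1 : (x ₜ* (y ₜ* tp1L e₀ : ⨂[K]^(k+1+1) E) : ⨂[K]^(N+(k+1+1)) E)
            ∈ Mspan N R (k+1) := IH (k+1) (by omega) x hx _
        have hsplit : conR ψ₀ (N+(k+1))
              ((x ₜ* (y ₜ* tp1L e₀ : ⨂[K]^(k+1+1) E) : ⨂[K]^(N+(k+1+1)) E))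
            = x ₜ* conR ψ₀ (k+1) ((y ₜ* tp1L e₀ : ⨂[K]^(k+1+1) E)) :=
          conR_nat ψ₀ x (y ₜ* tp1L e₀)
        have heval : conR ψ₀ (k+1) ((y ₜ* tp1L e₀ : ⨂[K]^(k+1+1) E)) = y := by
          rw [conR_mul, hψ₀]
          simp only [LinearMap.coe_comp, Function.comp_apply, LinearEquiv.coe_coe,
            toE_tp1L, h₀, one_smul]
        have := conR_Mspan R ψ₀ h1
        rw [hsplit, heval] at this
        exact this
    -- conclude via the core argument
    have HS : ∀ x ∈ R, ∀ e : E, (x ₜ* tp1L e : ⨂[K]^(N+1) E) ∈ lS R := by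
      intro x hx e
      have h0 := P rr 0 (by omega) x hx (tp1L e)
      exact Mspan_zero_le_lS R h0
    exact core N R HS

end St10
end St10Aux

/-- Let `K` be a field, `N ≥ 3`, `E` a finite-dimensional `K`-vector
space, `R ⊆ E^⊗N` a subspace and `1 ≤ r ≤ N - 2`.  If `⋂_{i+j=r} E^⊗i ⊗ R ⊗ E^⊗j` equals
`R ⊗ E^⊗r` as subspaces of `E^⊗(N+r)`, then `R = 0` or `R = E^⊗N`. -/
theorem statement10 [FiniteDimensional K E] (N : ℕ) (hN : 3 ≤ N)
    (R : Submodule K (⨂[K]^N E)) (r : ℕ) (hr1 : 1 ≤ r) (hr2 : r ≤ N - 2)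
    (h : (⨅ i : Fin (r + 1), subMiddle K E R r i (r - i) (by omega))
        = subRight K E R r) :
    R = ⊥ ∨ R = ⊤ := by
  obtain ⟨rr, rfl⟩ : ∃ rr, r = rr + 1 := ⟨r - 1, by omega⟩
  have hsub : subRight K E R (rr+1) ≤ subMiddle K E R (rr+1) 1 rr (by omega) := by
    rw [← h]
    exact iInf_le _ (⟨1, by omega⟩ : Fin (rr + 1 + 1))
  exact St10.main N hN R rr hsub
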